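/- Let D = (L, R, A, ‾) be an ABA framework and D* the framework obtained by (1) adding for each assumption a ∈ A a fresh atom c_a designated as a's new contrary and (2) adding the rule c_a ← p whenever p was a's contrary in D. Then for every set of assumptions S ⊆ A and every assumption a ∈ A: S attacks a in D if and only if S attacks a in D*. Consequently, stb(D) = stb(D*). -/

import Mathlib

/- Literals: atoms and naf-negated atoms -/
inductive Lit (α : Type) where
  | pos : α → Lit α
  | neg : α → Lit α
deriving DecidableEq

/- A rule with a head sentence and a finite body of sentences -/
structure ABARule (σ : Type) where
  head : σ
  body : Finset σ

/- A logic program with naf in the head: rules over literals -/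
abbrev LP (α : Type) := Set (ABARule (Lit α))

/-- Herbrand base: atoms occurring in P -/
def HB {α : Type} (P : LP α) : Set α :=
  {a | ∃ r ∈ P, r.head = Lit.pos a ∨ r.head = Lit.neg a ∨ Lit.pos a ∈ r.body ∨ Lit.neg a ∈ r.body}

/-- Δ(I) = {not p | p ∈ HB_P, p ∉ I} -/
def DeltaSet {α : Type} (P : LP α) (I : Set α) : Set (Lit α) :=
  {l | ∃ p, p ∈ HB P ∧ p ∉ I ∧ l = Lit.neg p}

/- Positive program rules: possibly empty head (constraints) -/
structure PosRule (α : Type) where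
  head : Option α
  body : Set α

def bodyPos {α : Type} (r : ABARule (Lit α)) : Set α := {a | Lit.pos a ∈ r.body}
def bodyNeg {α : Type} (r : ABARule (Lit α)) : Set α := {a | Lit.neg a ∈ r.body}
def headPos {α : Type} (r : ABARule (Lit α)) : Option α :=
  match r.head with
  | .pos a => some a
  | .neg _ => none
def headNeg {α : Type} (r : ABARule (Lit α)) : Set α := {a | r.head = Lit.neg a}

/-- The reduct P^I -/
def reduct {α : Type} (P : LP α) (I : Set α) : Set (PosRule α) :=
  {q | ∃ r ∈ P, bodyNeg r ∩ I = ∅ ∧ headNeg r ⊆ I ∧ q = ⟨headPos r, bodyPos r⟩}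

/-- Conditions (a) and (b): J is a (supported) Herbrand model of a positive program Q -/
def SatModel {α : Type} (Q : Set (PosRule α)) (J : Set α) : Prop :=
  (∀ p, p ∈ J ↔ ∃ q ∈ Q, q.head = some p ∧ q.body ⊆ J) ∧
  (∀ q ∈ Q, q.head = none → ¬ q.body ⊆ J)

/-- Stable model: ⊆-minimal set of atoms satisfying (a) and (b) w.r.t. P^I -/
def StableModel {α : Type} (P : LP α) (I : Set α) : Prop :=
  I ⊆ HB P ∧ SatModel (reduct P I) I ∧ ∀ J ⊆ I, SatModel (reduct P I) J → J = I

/-- Derivability in a positive program -/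
inductive PosDeriv {α : Type} (Q : Set (PosRule α)) : α → Prop
  | step {q : PosRule α} {a : α} : q ∈ Q → q.head = some a →
      (∀ b ∈ q.body, PosDeriv Q b) → PosDeriv Q a

/-- Tree-derivability of a sentence from (a subset of) the assumption set S using rules R -/
inductive Deriv {σ : Type} (R : Set (ABARule σ)) (S : Set σ) : σ → Prop
  | assum {s : σ} : s ∈ S → Deriv R S s
  | step {r : ABARule σ} : r ∈ R → (∀ b ∈ r.body, Deriv R S b) → Deriv R S r.head

/- Assumption-based argumentation frameworks -/
structure ABAF (σ : Type) where
  L : Set σ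
  R : Set (ABARule σ)
  A : Set σ
  co : σ → σ

def ThSet {σ : Type} (D : ABAF σ) (S : Set σ) : Set σ := {p | Deriv D.R S p}

def ConflictFree {σ : Type} (D : ABAF σ) (S : Set σ) : Prop :=
  ∀ a ∈ S, ¬ Deriv D.R S (D.co a)

def ABAClosed {σ : Type} (D : ABAF σ) (S : Set σ) : Prop :=
  ∀ a ∈ D.A, Deriv D.R S a → a ∈ S

/-- Stable extensions: closed conflict-free sets attacking every outside assumption -/
def StableExt {σ : Type} (D : ABAF σ) (S : Set σ) : Prop :=
  S ⊆ D.A ∧ ConflictFree D S ∧ ABAClosed D S ∧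
    ∀ x ∈ D.A, x ∉ S → Deriv D.R S (D.co x)

/-- Set-stable extensions: attack the closure cl({x}) of every outside assumption -/
def SetStableExt {σ : Type} (D : ABAF σ) (S : Set σ) : Prop :=
  S ⊆ D.A ∧ ConflictFree D S ∧ ABAClosed D S ∧
    ∀ x ∈ D.A, x ∉ S → ∃ b ∈ D.A, Deriv D.R {x} b ∧ Deriv D.R S (D.co b)

/-- The ABA framework D_P corresponding to an LP P -/
def ABAFofLP {α : Type} (P : LP α) : ABAF (Lit α) :=
  { L := {l | ∃ p ∈ HB P, l = Lit.pos p ∨ l = Lit.neg p}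
    R := P
    A := {l | ∃ p ∈ HB P, l = Lit.neg p}
    co := fun l => match l with
      | .pos p => Lit.pos p
      | .neg p => Lit.pos p }

/-- The LP-ABA fragment: no assumption is a contrary, contrary injective, L = A ∪ Ā
    (together with well-formedness of rules and contraries w.r.t. the language) -/
def IsLPABA {σ : Type} (D : ABAF σ) : Prop :=
  (∀ r ∈ D.R, r.head ∈ D.L ∧ ∀ b ∈ r.body, b ∈ D.L) ∧
  D.A ⊆ D.L ∧
  (∀ a ∈ D.A, D.co a ∉ D.A) ∧
  Set.InjOn D.co D.A ∧
  D.L = D.A ∪ D.co '' D.A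

open Classical in
/-- rep(a) = not ā for assumptions, rep(s) = s (as an atom) otherwise -/
noncomputable def repLit {σ : Type} (D : ABAF σ) (s : σ) : Lit σ :=
  if s ∈ D.A then Lit.neg (D.co s) else Lit.pos s

noncomputable def repRule {σ : Type} [DecidableEq σ] (D : ABAF σ) (r : ABARule σ) :
    ABARule (Lit σ) :=
  ⟨repLit D r.head, r.body.image (repLit D)⟩

/-- The LP P_D associated with an (LP-)ABAF D -/
noncomputable def LPofABAF {σ : Type} [DecidableEq σ] (D : ABAF σ) : LP σ :=
  (repRule D) '' D.R

/-- One-step support operator -/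
def suppOp {α : Type} (P : LP α) (S : Set (Lit α)) : Set (Lit α) :=
  S ∪ {l | ∃ r ∈ P, r.head = l ∧ ∀ b ∈ r.body, b ∈ S}

/-- Closure cl(S) = ⋃_{i>0} suppⁱ(S) -/
def clLP {α : Type} (P : LP α) (S : Set (Lit α)) : Set (Lit α) :=
  ⋃ i : ℕ, (suppOp P)^[i + 1] S

/-- The set-stable reduct P^I_s = P^I ∪ {a ← b | a ≠ b, not b ∈ cl({not a})} -/
def sReduct {α : Type} (P : LP α) (I : Set α) : Set (PosRule α) :=
  reduct P I ∪
    {q | ∃ a b, a ∈ HB P ∧ b ∈ HB P ∧ a ≠ b ∧ Lit.neg b ∈ clLP P {Lit.neg a} ∧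
        q = ⟨some a, {b}⟩}

/-- Set-stable models -/
def SetStableModel {α : Type} (P : LP α) (I : Set α) : Prop :=
  I ⊆ HB P ∧ SatModel (sReduct P I) I ∧ ∀ J ⊆ I, SatModel (sReduct P I) J → J = I

/-- Bipolar LPs: each rule body is a single naf-literal -/
def IsBipolarLP {α : Type} (P : LP α) : Prop :=
  ∀ r ∈ P, ∃ b, r.body = {Lit.neg b}

/-- All (positive and naf) literals over the Herbrand base of P -/
def LitsOf {α : Type} (P : LP α) : Set (Lit α) :=
  {l | ∃ p ∈ HB P, l = Lit.pos p ∨ l = Lit.neg p}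

/-- The framework D* obtained from D by adding a fresh contrary c_a (here `Sum.inr a`)
    for each assumption a, together with the rule c_a ← p for p the old contrary of a. -/
def DStar {σ : Type} [DecidableEq σ] (D : ABAF σ) : ABAF (σ ⊕ σ) :=
  { L := Sum.inl '' D.L ∪ Sum.inr '' D.A
    R := (fun r : ABARule σ => ABARule.mk (Sum.inl r.head) (r.body.image Sum.inl)) '' D.R ∪
         (fun a : σ => ABARule.mk (Sum.inr a) ({Sum.inl (D.co a)} : Finset (σ ⊕ σ))) '' D.A
    A := Sum.inl '' D.A
    co := Sum.elim (fun s => Sum.inr s) (fun s => Sum.inr s) }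

/-
Since the fresh atoms `c_a` occur in no rule body, a rule `c_a ← ā` can only be the last step of
a derivation in D*. So Th_{D*}(S) consists of the old theorems Th_D(S) together with those `c_a`
with `ā ∈ Th_D(S)`: the new contrary of `a` is derivable exactly when the old one was, and each
clause in the definition of a stable extension transfers verbatim.
-/

section DStar

variable {σ : Type} [DecidableEq σ] (D : ABAF σ) {S : Set σ}

theorem dStar_A : (DStar D).A = Sum.inl '' D.A := rfl

theorem dStar_co_inl (a : σ) : (DStar D).co (Sum.inl a) = Sum.inr a := rfl

theorem deriv_dStar_inl_of_deriv {p : σ} (h : Deriv D.R S p) :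
    Deriv (DStar D).R (Sum.inl '' S) (Sum.inl p) := by
  induction h with
  | assum hs => exact Deriv.assum (Set.mem_image_of_mem _ hs)
  | step hr _ ih =>
    refine Deriv.step (R := (DStar D).R) (Or.inl ⟨_, hr, rfl⟩) ?_
    simpa only [Finset.forall_mem_image] using ih

theorem deriv_of_deriv_dStar {x : σ ⊕ σ} (h : Deriv (DStar D).R (Sum.inl '' S) x) :
    Sum.elim (Deriv D.R S) (fun a => a ∈ D.A ∧ Deriv D.R S (D.co a)) x := by
  induction h with
  | assum hs =>
    obtain ⟨p, hp, rfl⟩ := hs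
    exact Deriv.assum hp
  | step hr _ ih =>
    obtain ⟨r, hr, rfl⟩ | ⟨a, ha, rfl⟩ := hr
    · exact Deriv.step hr fun b hb => ih (Sum.inl b) (Finset.mem_image_of_mem _ hb)
    · exact ⟨ha, ih (Sum.inl (D.co a)) (Finset.mem_singleton_self _)⟩

theorem deriv_dStar_inl_iff {p : σ} :
    Deriv (DStar D).R (Sum.inl '' S) (Sum.inl p) ↔ Deriv D.R S p :=
  ⟨deriv_of_deriv_dStar D, deriv_dStar_inl_of_deriv D⟩

theorem deriv_dStar_inr_iff {a : σ} (ha : a ∈ D.A) :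
    Deriv (DStar D).R (Sum.inl '' S) (Sum.inr a) ↔ Deriv D.R S (D.co a) := by
  refine ⟨fun h => (deriv_of_deriv_dStar D h).2, fun h => ?_⟩
  refine Deriv.step (R := (DStar D).R) (Or.inr ⟨a, ha, rfl⟩) ?_
  simpa only [Finset.mem_singleton, forall_eq] using deriv_dStar_inl_of_deriv D h

theorem conflictFree_dStar_iff (hS : S ⊆ D.A) :
    ConflictFree (DStar D) (Sum.inl '' S) ↔ ConflictFree D S := by
  simp only [ConflictFree, Set.forall_mem_image, dStar_co_inl]
  exact forall₂_congr fun a ha => not_congr (deriv_dStar_inr_iff D (hS ha))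

theorem abaClosed_dStar_iff : ABAClosed (DStar D) (Sum.inl '' S) ↔ ABAClosed D S := by
  simp only [ABAClosed, dStar_A, Set.forall_mem_image, deriv_dStar_inl_iff,
    Sum.inl_injective.mem_set_image]

theorem attacks_outside_dStar_iff :
    (∀ x ∈ (DStar D).A, x ∉ Sum.inl '' S → Deriv (DStar D).R (Sum.inl '' S) ((DStar D).co x)) ↔
      ∀ a ∈ D.A, a ∉ S → Deriv D.R S (D.co a) := by
  simp only [dStar_A, Set.forall_mem_image, Sum.inl_injective.mem_set_image, dStar_co_inl]
  exact forall₂_congr fun a ha => imp_congr_right fun _ => deriv_dStar_inr_iff D ha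

end DStar

/-- for every S ⊆ A and a ∈ A, S attacks a in D iff S attacks a in D*;
    consequently stb(D) = stb(D*) (under the embedding of assumptions). -/
theorem stmt8 {σ : Type} [DecidableEq σ] (D : ABAF σ) :
    (∀ S ⊆ D.A, ∀ a ∈ D.A,
      (Deriv D.R S (D.co a) ↔
        Deriv (DStar D).R (Sum.inl '' S) ((DStar D).co (Sum.inl a)))) ∧
    (∀ S ⊆ D.A, StableExt D S ↔ StableExt (DStar D) (Sum.inl '' S)) := by
  refine ⟨fun S _ a ha => (deriv_dStar_inr_iff D ha).symm, fun S hS => ?_⟩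
  have hS' : Sum.inl '' S ⊆ (DStar D).A := Set.image_mono hS
  rw [StableExt, StableExt, conflictFree_dStar_iff D hS, abaClosed_dStar_iff,
    attacks_outside_dStar_iff]
  simp only [hS, hS', true_and]
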